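/- Every finite game (finitely many players, each with a finite nonempty action set, and real-valued utility functions) admits a correlated equilibrium, i.e., a probability distribution P over the joint action space such that for every player c and every pair of actions a_c, ã_c of player c, the sum over opponent profiles A_{-c} of P(a_c, A_{-c})·[U_c(a_c, A_{-c}) − U_c(ã_c, A_{-c})] is nonnegative. -/

import Mathlib

/-!
Following Hart and Schmeidler, by linear-programming duality it suffices to beat every nonnegative
weighting `w` of the incentive constraints: to find a distribution under which the `w`-weighted
expected deviation loss is nonnegative. For each player `c`, read `w ⟨c, x, y⟩` as the rate at
which a Markov chain on `A c` jumps from `x` to `y`, and let every player draw independently from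
a stationary distribution of their chain. The weighted loss of player `c` is then a difference
between the `U c`-weighted flows out of and into the actions of `c`, which balance in the
stationary regime, so it vanishes. Stationary distributions themselves come from the same duality.
-/

open Finset Function Matrix

/-- The theorem of the alternative behind von Neumann's minimax theorem for the matrix game `G`. -/
theorem Matrix.exists_mem_stdSimplex_nonneg_vecMul {α τ : Type*} [Fintype α] [Fintype τ]
    (G : Matrix α τ ℝ) (h : ∀ w, 0 ≤ w → ∃ P ∈ stdSimplex ℝ α, 0 ≤ P ⬝ᵥ G *ᵥ w) :
    ∃ P ∈ stdSimplex ℝ α, 0 ≤ P ᵥ* G := by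
  classical
  by_contra! hneg
  obtain ⟨f, hf_nonneg, hf_neg⟩ := (ProperCone.positive ℝ (τ → ℝ)).hyperplane_separation
    ((convex_stdSimplex ℝ α).linear_image G.vecMulLinear)
    ((isCompact_stdSimplex ℝ α).image G.vecMulLinear.continuous_of_finiteDimensional)
    (Set.disjoint_left.2 <| by rintro _ ⟨P, hP, rfl⟩; exact hneg P hP)
  set w : τ → ℝ := fun t => f fun s => if t = s then 1 else 0
  have hw : 0 ≤ w := fun t => hf_nonneg _ fun s => by dsimp only; split_ifs <;> norm_num
  have hf : ∀ v, f v = v ⬝ᵥ w := fun v => by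
    simpa [dotProduct] using (f : (τ → ℝ) →ₗ[ℝ] ℝ).pi_apply_eq_sum_univ v
  obtain ⟨P, hP, hPw⟩ := h w hw
  rw [dotProduct_mulVec, ← hf] at hPw
  exact (hf_neg _ ⟨P, hP, rfl⟩).not_ge hPw

section Stationary

variable {α : Type*} [Fintype α]

/-- `μ` is stationary for the continuous-time Markov chain with jump rates `L` (the diagonal of
`L` plays no role). -/
def Matrix.IsStationary (L : Matrix α α ℝ) (μ : α → ℝ) : Prop :=
  ∀ y, ∑ x, μ x * L x y = μ y * ∑ z, L y z

theorem Matrix.exists_mem_stdSimplex_isStationary [Nonempty α] (L : Matrix α α ℝ)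
    (hL : ∀ x y, 0 ≤ L x y) : ∃ μ ∈ stdSimplex ℝ α, L.IsStationary μ := by
  classical
  set D := L - diagonal (L *ᵥ 1)
  have hD : ∀ w x, (D *ᵥ w) x = ∑ y, L x y * (w y - w x) := fun w x => by
    rw [sub_mulVec, Pi.sub_apply, mulVec_diagonal]
    simp [mulVec, dotProduct, mul_sub, sum_mul]
  -- Against any `w`, the pure strategy at a minimum of `w` wins.
  obtain ⟨μ, hμ, hμD⟩ := D.exists_mem_stdSimplex_nonneg_vecMul fun w _ => by
    obtain ⟨x, -, hx⟩ := exists_min_image univ w univ_nonempty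
    refine ⟨Pi.single x 1, single_mem_stdSimplex ℝ x, ?_⟩
    rw [single_dotProduct, one_mul, hD]
    exact sum_nonneg fun y _ => mul_nonneg (hL x y) (sub_nonneg.2 (hx y (mem_univ y)))
  -- The nonnegative entries of `μ ᵥ* D` sum to `μ ⬝ᵥ D *ᵥ 1 = 0`, so they all vanish.
  have hsum : ∑ y, (μ ᵥ* D) y = 0 := by
    rw [← dotProduct_one, ← dotProduct_mulVec]
    simp [dotProduct, hD]
  refine ⟨μ, hμ, fun y => ?_⟩
  have hy := (sum_eq_zero_iff_of_nonneg fun y _ => hμD y).1 hsum y (mem_univ y)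
  simp only [D, vecMul_sub, vecMul_diagonal, Pi.sub_apply, sub_eq_zero] at hy
  simpa [vecMul, dotProduct, mulVec, mul_comm] using hy

end Stationary

section Product

variable {ι : Type*} [Fintype ι] [DecidableEq ι] {A : ι → Type*} [∀ i, Fintype (A i)]

theorem prod_mem_stdSimplex {μ : ∀ i, A i → ℝ} (hμ : ∀ i, μ i ∈ stdSimplex ℝ (A i)) :
    (fun a => ∏ i, μ i (a i)) ∈ stdSimplex ℝ (∀ i, A i) :=
  ⟨fun a => prod_nonneg fun i _ => (hμ i).1 (a i), by
    rw [← Fintype.prod_sum]; exact prod_eq_one fun i _ => (hμ i).2⟩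

theorem sum_sum_update_swap {M : Type*} [AddCommMonoid M] (c : ι) (F : (∀ i, A i) → A c → M) :
    ∑ a, ∑ y, F a y = ∑ a, ∑ y, F (update a c y) (a c) := by
  have hinv : Involutive fun p : (∀ i, A i) × A c => (update p.1 c p.2, p.1 c) := by
    rintro ⟨a, y⟩
    simp
  simp only [← Fintype.sum_prod_type']
  exact (Equiv.sum_comp (hinv.toPerm _) fun p => F p.1 p.2).symm

omit [∀ i, Fintype (A i)] in
theorem prod_apply_update (μ : ∀ i, A i → ℝ) (a : ∀ i, A i) (c : ι) (y : A c) :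
    ∏ i, μ i (update a c y i) = μ c y * ∏ i ∈ {c}ᶜ, μ i (a i) := by
  simp_rw [apply_update]
  rw [prod_update_of_mem (mem_univ c), compl_eq_univ_sdiff]

theorem Matrix.IsStationary.sum_prod_mul_sum_mul_sub_update_eq_zero (μ : ∀ i, A i → ℝ) {c : ι}
    {L : Matrix (A c) (A c) ℝ} (hμ : L.IsStationary (μ c)) (h : (∀ i, A i) → ℝ) :
    ∑ a, (∏ i, μ i (a i)) * ∑ y, L (a c) y * (h a - h (update a c y)) = 0 := by
  have hP : ∀ a : ∀ i, A i, ∏ i, μ i (a i) = μ c (a c) * ∏ i ∈ {c}ᶜ, μ i (a i) := fun a => by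
    simpa using prod_apply_update μ a c (a c)
  have hswap : ∑ a, ∑ y, (∏ i, μ i (a i)) * L (a c) y * h (update a c y)
      = ∑ a, ∑ y, (∏ i, μ i (update a c y i)) * L y (a c) * h a := by
    simpa using sum_sum_update_swap c fun (a : ∀ i, A i) y =>
      (∏ i, μ i (a i)) * L (a c) y * h (update a c y)
  simp only [mul_sub, mul_sum, sum_sub_distrib, ← mul_assoc, hswap, prod_apply_update]
  rw [sub_eq_zero]
  refine sum_congr rfl fun a _ => ?_
  calc ∑ y, (∏ i, μ i (a i)) * L (a c) y * h a
      = (∏ i ∈ {c}ᶜ, μ i (a i)) * h a * (μ c (a c) * ∑ y, L (a c) y) := by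
        rw [hP, mul_sum, mul_sum]; exact sum_congr rfl fun y _ => by ring
    _ = (∏ i ∈ {c}ᶜ, μ i (a i)) * h a * ∑ y, μ c y * L y (a c) := by rw [hμ]
    _ = ∑ y, μ c y * (∏ i ∈ {c}ᶜ, μ i (a i)) * L y (a c) * h a := by
        rw [mul_sum]; exact sum_congr rfl fun y _ => by ring

variable [∀ i, DecidableEq (A i)]

/-- Column `⟨c, x, y⟩` is what player `c` loses by playing `y` when recommended `x`; the
correlated equilibria are the `P ∈ stdSimplex` with `0 ≤ P ᵥ* deviationLoss U`. -/
def deviationLoss (U : ι → (∀ i, A i) → ℝ) : Matrix (∀ i, A i) (Σ c, A c × A c) ℝ :=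
  fun a t => if a t.1 = t.2.1 then U t.1 a - U t.1 (update a t.1 t.2.2) else 0

theorem deviationLoss_mulVec (U : ι → (∀ i, A i) → ℝ) (w : (Σ c, A c × A c) → ℝ)
    (a : ∀ i, A i) :
    (deviationLoss U *ᵥ w) a = ∑ c, ∑ y, w ⟨c, a c, y⟩ * (U c a - U c (update a c y)) := by
  simp [deviationLoss, mulVec, dotProduct, Fintype.sum_sigma, Fintype.sum_prod_type, mul_comm]

theorem dotProduct_deviationLoss_mulVec_eq_zero (U : ι → (∀ i, A i) → ℝ)
    {w : (Σ c, A c × A c) → ℝ} {μ : ∀ i, A i → ℝ}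
    (hμ : ∀ c, IsStationary (fun x y : A c => w ⟨c, x, y⟩) (μ c)) :
    (fun a => ∏ i, μ i (a i)) ⬝ᵥ deviationLoss U *ᵥ w = 0 := by
  simp only [dotProduct, deviationLoss_mulVec, mul_sum]
  rw [sum_comm]
  exact sum_eq_zero fun c _ => by
    simpa only [mul_sum] using (hμ c).sum_prod_mul_sum_mul_sub_update_eq_zero μ (U c)

end Product

/-- Every finite game admits a correlated equilibrium. -/
theorem finite_game_has_correlated_equilibrium
    {ι : Type} [Fintype ι] [DecidableEq ι]
    (A : ι → Type) [∀ i, Fintype (A i)] [∀ i, Nonempty (A i)]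
    [∀ i, DecidableEq (A i)]
    (U : ι → (∀ i, A i) → ℝ) :
    ∃ P : (∀ i, A i) → ℝ,
      (∀ a, 0 ≤ P a) ∧ (∑ a, P a = 1) ∧
      ∀ (c : ι) (ac ac' : A c),
        0 ≤ ∑ a : (∀ i, A i),
          (if a c = ac then P a * (U c a - U c (Function.update a c ac')) else 0) := by
  obtain ⟨P, hP, hPU⟩ := (deviationLoss U).exists_mem_stdSimplex_nonneg_vecMul fun w hw => by
    choose μ hμ hstat using fun c =>
      exists_mem_stdSimplex_isStationary (fun x y : A c => w ⟨c, x, y⟩) fun _ _ => hw _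
    exact ⟨_, prod_mem_stdSimplex hμ, (dotProduct_deviationLoss_mulVec_eq_zero U hstat).ge⟩
  refine ⟨P, hP.1, hP.2, fun c x y => ?_⟩
  simpa [deviationLoss, vecMul, dotProduct, mul_ite] using hPU ⟨c, x, y⟩
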